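/- Let X ⊆ ℝ^n satisfy: there is a constant k such that any two points x', y' ∈ X are joined by a C¹ curve in X with speed at most k|x' − y'|. Let f : X → ℝ^m be a C¹ function with derivative bounded in operator norm by L. Then the graph Γ(f) = {(x, f(x)) : x ∈ X} ⊆ ℝ^{n+m} satisfies the same property with constant (1+L)k: any two points p, q ∈ Γ(f) are joined by a C¹ curve in Γ(f) with speed at most (1+L)k|p − q|. -/

import Mathlib

open MeasureTheory Set ENNReal
noncomputable section

abbrev E (n : ℕ) := EuclideanSpace ℝ (Fin n)

/-- There is a C¹ curve in `S` from `x` to `y` of speed at most `c * ‖x − y‖`. -/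
def HasCurve {V : Type*} [NormedAddCommGroup V] [NormedSpace ℝ V]
    (S : Set V) (c : ℝ) (x y : V) : Prop :=
  ∃ γ : ℝ → V, γ 0 = x ∧ γ 1 = y ∧ (∀ t ∈ Set.Icc (0:ℝ) 1, γ t ∈ S) ∧
    ContDiffOn ℝ 1 γ (Set.Icc 0 1) ∧
    ∀ t ∈ Set.Icc (0:ℝ) 1, ‖derivWithin γ (Set.Icc 0 1) t‖ ≤ c * ‖x - y‖

/-- The graph of f over X, inside the ℓ²-product ℝ^n ×₂ ℝ^m ≅ ℝ^{n+m}. -/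
def FunGraph {n m : ℕ} (X : Set (E n)) (f : E n → E m) : Set (WithLp 2 (E n × E m)) :=
  {p | (WithLp.equiv 2 (E n × E m) p).1 ∈ X ∧
    (WithLp.equiv 2 (E n × E m) p).2 = f (WithLp.equiv 2 (E n × E m) p).1}

/-! Lift a curve `γ` joining the base points to `t ↦ (γ t, f (γ t))`. By the chain rule its
velocity `(γ', Df γ')` has norm at most `(1 + L) ‖γ'‖`, and the distance of the base points is
at most that of the graph points. -/

open WithLp

lemma WithLp.norm_toLp_prod_le_add {p : ℝ≥0∞} [Fact (1 ≤ p)] {α β : Type*}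
    [SeminormedAddCommGroup α] [SeminormedAddCommGroup β] (a : α) (b : β) :
    ‖toLp p (a, b)‖ ≤ ‖a‖ + ‖b‖ :=
  calc ‖toLp p (a, b)‖ = ‖toLp p (a, (0 : β)) + toLp p ((0 : α), b)‖ := by
        rw [← toLp_add, Prod.mk_add_mk, add_zero, zero_add]
    _ ≤ ‖a‖ + ‖b‖ := (norm_add_le _ _).trans_eq (by rw [norm_toLp_fst, norm_toLp_snd])

section Graph

variable {V W : Type*} [NormedAddCommGroup V] [NormedSpace ℝ V]
  [NormedAddCommGroup W] [NormedSpace ℝ W]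

theorem HasDerivWithinAt.toLp_prodMk_comp {γ : ℝ → V} {γ' : V} {s : Set ℝ} {t : ℝ}
    {S : Set V} {f : V → W} {f' : V →L[ℝ] W}
    (hγ : HasDerivWithinAt γ γ' s t) (hf : HasFDerivWithinAt f f' S (γ t)) (hγS : MapsTo γ s S) :
    HasDerivWithinAt (fun u ↦ toLp 2 (γ u, f (γ u))) (toLp 2 (γ', f' γ')) s t :=
  (prodContinuousLinearEquiv 2 ℝ V W).symm.hasFDerivAt.comp_hasDerivWithinAt t
    (hγ.prodMk (hf.comp_hasDerivWithinAt t hγ hγS))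

theorem HasCurve.graph {S : Set V} {f : V → W} {c L : ℝ} (hc : 0 ≤ c)
    (hf : ContDiffOn ℝ 1 f S) (hL : ∀ x ∈ S, ‖fderivWithin ℝ f S x‖ ≤ L) {x y : V}
    (h : HasCurve S c x y) :
    HasCurve {p : WithLp 2 (V × W) | p.fst ∈ S ∧ p.snd = f p.fst} ((1 + L) * c)
      (toLp 2 (x, f x)) (toLp 2 (y, f y)) := by
  obtain ⟨γ, rfl, rfl, hγS, hγ, hγ'⟩ := h
  have hγS' : MapsTo γ (Icc 0 1) S := hγS
  have hL0 : 0 ≤ L := (norm_nonneg _).trans (hL _ (hγS 0 (left_mem_Icc.2 zero_le_one)))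
  refine ⟨fun u ↦ toLp 2 (γ u, f (γ u)), rfl, rfl, fun t ht ↦ ⟨hγS t ht, rfl⟩,
    (prodContinuousLinearEquiv 2 ℝ V W).symm.contDiff.comp_contDiffOn
      (hγ.prodMk (hf.comp hγ hγS')), fun t ht ↦ ?_⟩
  set a := derivWithin γ (Icc 0 1) t
  have hderiv := (((hγ.differentiableOn one_ne_zero) t ht).hasDerivWithinAt).toLp_prodMk_comp
    ((hf.differentiableOn one_ne_zero _ (hγS t ht)).hasFDerivWithinAt) hγS'
  rw [hderiv.derivWithin (uniqueDiffOn_Icc one_pos t ht)]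
  have hfst : ‖γ 0 - γ 1‖ ≤ ‖toLp 2 (γ 0, f (γ 0)) - toLp 2 (γ 1, f (γ 1))‖ :=
    WithLp.norm_fst_le (x := toLp 2 (γ 0, f (γ 0)) - toLp 2 (γ 1, f (γ 1)))
  calc ‖toLp 2 (a, fderivWithin ℝ f S (γ t) a)‖
      ≤ ‖a‖ + ‖fderivWithin ℝ f S (γ t) a‖ := norm_toLp_prod_le_add _ _
    _ ≤ ‖a‖ + L * ‖a‖ := by
        gcongr
        exact ContinuousLinearMap.le_of_opNorm_le _ (hL _ (hγS t ht)) a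
    _ = (1 + L) * ‖a‖ := by ring
    _ ≤ (1 + L) * (c * ‖γ 0 - γ 1‖) := by gcongr; exact hγ' t ht
    _ ≤ (1 + L) * c * ‖toLp 2 (γ 0, f (γ 0)) - toLp 2 (γ 1, f (γ 1))‖ := by
        rw [mul_assoc]; gcongr

end Graph

theorem stmt7 (n m : ℕ) (X : Set (E n)) (k L : ℝ) (hk : 0 < k)
    (hX : ∀ x ∈ X, ∀ y ∈ X, HasCurve X k x y)
    (f : E n → E m) (hf : ContDiffOn ℝ 1 f X)
    (hL : ∀ x ∈ X, ‖fderivWithin ℝ f X x‖ ≤ L) :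
    ∀ p ∈ FunGraph X f, ∀ q ∈ FunGraph X f, HasCurve (FunGraph X f) ((1 + L) * k) p q := by
  rintro ⟨x, fx⟩ ⟨hx, hfx : fx = f x⟩ ⟨y, fy⟩ ⟨hy, hfy : fy = f y⟩
  subst hfx hfy
  exact (hX x hx y hy).graph hk.le hf hL
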